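/- For a rational number k, the discriminant Δ(k) = 16(A(k)² − 4B(k))B(k)² of the curve y² = x³ + A(k)x² + B(k)x vanishes if and only if k ∈ {0, 2, −2}; in particular, for every rational k ∉ {0, 2, −2} the Weierstrass curve y² = (x + a(k)b(k))(x + b(k)c(k))(x + a(k)c(k)) is nonsingular, i.e., an elliptic curve over ℚ. -/

import Mathlib

/-- The side `a(k) = 5k² − 4k + 4` of the Heron triangle family. -/
def sideA (k : ℚ) : ℚ := 5 * k ^ 2 - 4 * k + 4

/-- The side `b(k) = (1/2)k(k² − 4k + 20)` of the Heron triangle family. -/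
def sideB (k : ℚ) : ℚ := (1 / 2) * k * (k ^ 2 - 4 * k + 20)

/-- The side `c(k) = (1/2)(k+2)(k² − 4)` of the Heron triangle family. -/
def sideC (k : ℚ) : ℚ := (1 / 2) * (k + 2) * (k ^ 2 - 4)
/-- The coefficient `A(k) = a(k)b(k) + b(k)c(k) − 2a(k)c(k)` of the shifted curve
`y² = x³ + Ax² + Bx`. -/
def coeffA (k : ℚ) : ℚ := sideA k * sideB k + sideB k * sideC k - 2 * (sideA k * sideC k)

/-- The coefficient `B(k) = (a(k)b(k) − a(k)c(k))(b(k)c(k) − a(k)c(k))` of the shifted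
curve `y² = x³ + Ax² + Bx`. -/
def coeffB (k : ℚ) : ℚ :=
  (sideA k * sideB k - sideA k * sideC k) * (sideB k * sideC k - sideA k * sideC k)
/-- The elliptic curve `E_k : y² = (x + ab)(x + bc)(x + ac)`, written as the Weierstrass
curve `y² = x³ + (ab + bc + ca)x² + abc(a + b + c)x + (abc)²`. -/
def Ek (k : ℚ) : WeierstrassCurve.Affine ℚ where
  a₁ := 0
  a₂ := sideA k * sideB k + sideB k * sideC k + sideC k * sideA k
  a₃ := 0
  a₄ := sideA k * sideB k * sideC k * (sideA k + sideB k + sideC k)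
  a₆ := (sideA k * sideB k * sideC k) ^ 2

/-
Both `16(A² − 4B)B²` and `Δ(E_k)` equal `16 ((ab − bc)(bc − ca)(ca − ab))²`, the discriminant
of a cubic with roots `−ab, −bc, −ca`. Its factors are `a, b, c, a − c, b − a, b − c`: the side
`a` is a positive definite quadratic, `b` vanishes only at `k = 0`, `c = (k + 2)²(k − 2)/2`, and
`b − a = (k − 2)((k − 6)² − 32)/2`, while `a − c` and `b − c` vanish only at irrational `k`,
by the integral root theorem and since `32` and `48` are not rational squares.
-/

open Polynomial

namespace WeierstrassCurve

variable {R : Type*} [CommRing R]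

/-- The curve `y² = (x + u)(x + v)(x + w)`. -/
def ofRoots (u v w : R) : WeierstrassCurve R where
  a₁ := 0
  a₂ := u + v + w
  a₃ := 0
  a₄ := u * v + v * w + w * u
  a₆ := u * v * w

theorem ofRoots_Δ (u v w : R) : (ofRoots u v w).Δ = 16 * ((u - v) * (v - w) * (w - u)) ^ 2 := by
  simp only [Δ, b₂, b₄, b₆, b₈, ofRoots]
  ring

end WeierstrassCurve

theorem Ek_eq_ofRoots (k : ℚ) :
    Ek k = .ofRoots (sideA k * sideB k) (sideB k * sideC k) (sideC k * sideA k) := by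
  ext <;> simp only [Ek, WeierstrassCurve.ofRoots] <;> ring

theorem sideA_ne_zero (k : ℚ) : sideA k ≠ 0 := by
  unfold sideA
  nlinarith [sq_nonneg k, sq_nonneg (k - 2)]

theorem sideB_eq_zero_iff {k : ℚ} : sideB k = 0 ↔ k = 0 := by
  have hq : k ^ 2 - 4 * k + 20 ≠ 0 := by nlinarith [sq_nonneg (k - 2)]
  simp [sideB, hq]

theorem sideC_eq_zero_iff {k : ℚ} : sideC k = 0 ↔ k = 2 ∨ k = -2 := by
  rw [show sideC k = (1 / 2) * (k + 2) ^ 2 * (k - 2) by unfold sideC; ring]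
  simp only [mul_eq_zero, pow_eq_zero_iff two_ne_zero, sub_eq_zero, add_eq_zero_iff_eq_neg]
  norm_num [or_comm]

theorem sq_ne_of_not_isSquare {M : Type*} [Monoid M] {a : M} (ha : ¬IsSquare a) (x : M) :
    x ^ 2 ≠ a :=
  fun h => ha (h ▸ IsSquare.sq x)

theorem cubic_ne_zero (k : ℚ) : k ^ 3 - 8 * k ^ 2 + 4 * k - 16 ≠ 0 := by
  intro h
  have hmonic : (X ^ 3 - 8 * X ^ 2 + 4 * X - 16 : ℤ[X]).Monic := by monicity!
  obtain ⟨z, rfl⟩ := isInteger_of_is_root_of_monic hmonic (r := k) (by simpa [map_ofNat] using h)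
  have hz : z ^ 3 - 8 * z ^ 2 + 4 * z - 16 = 0 := by
    simp only [algebraMap_int_eq, eq_intCast] at h
    exact_mod_cast h
  -- `z²(z − 8) = −4(z − 4)` forces `4 < z < 8`
  have h4 : 4 < z := by nlinarith [sq_nonneg z, sq_nonneg (z - 4)]
  have h8 : z < 8 := by nlinarith
  interval_cases z <;> omega

theorem sideA_ne_sideC (k : ℚ) : sideA k ≠ sideC k := fun h =>
  cubic_ne_zero k (by unfold sideA sideC at h; linear_combination -2 * h)

theorem sideB_ne_sideC (k : ℚ) : sideB k ≠ sideC k := fun h =>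
  sq_ne_of_not_isSquare (a := 48) (by norm_num) (3 * (k - 2))
    (by unfold sideB sideC at h; linear_combination -3 * h)

theorem eq_two_of_sideB_eq_sideA {k : ℚ} (h : sideB k = sideA k) : k = 2 := by
  have hfactor : sideB k - sideA k = (1 / 2) * (k - 2) * ((k - 6) ^ 2 - 32) := by
    unfold sideA sideB; ring
  have hsq : (k - 6) ^ 2 - 32 ≠ 0 :=
    sub_ne_zero.mpr (sq_ne_of_not_isSquare (by norm_num) (k - 6))
  simpa [sub_eq_zero, h, hsq] using hfactor.symm

theorem Ek_Δ_eq_zero_iff (k : ℚ) : (Ek k).Δ = 0 ↔ k = 0 ∨ k = 2 ∨ k = -2 := by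
  rw [Ek_eq_ofRoots, WeierstrassCurve.ofRoots_Δ,
    show sideA k * sideB k - sideB k * sideC k = sideB k * (sideA k - sideC k) by ring,
    show sideB k * sideC k - sideC k * sideA k = sideC k * (sideB k - sideA k) by ring,
    show sideC k * sideA k - sideA k * sideB k = sideA k * (sideC k - sideB k) by ring]
  simp only [mul_eq_zero, pow_eq_zero_iff two_ne_zero, sub_eq_zero, sideB_eq_zero_iff,
    sideC_eq_zero_iff, sideA_ne_zero, sideA_ne_sideC, (sideB_ne_sideC k).symm,
    OfNat.ofNat_ne_zero, or_false, false_or]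
  constructor
  · rintro (hb | hc | hab)
    exacts [.inl hb, .inr hc, .inr (.inl (eq_two_of_sideB_eq_sideA hab))]
  · rintro (h | h | h) <;> simp [h]

theorem shifted_discriminant_eq_Ek_Δ (k : ℚ) :
    16 * (coeffA k ^ 2 - 4 * coeffB k) * coeffB k ^ 2 = (Ek k).Δ := by
  rw [Ek_eq_ofRoots, WeierstrassCurve.ofRoots_Δ, coeffA, coeffB]
  ring

/-- the discriminant `Δ(k) = 16(A(k)² − 4B(k))B(k)²` vanishes iff
`k ∈ {0, 2, −2}`; in particular, for `k ∉ {0, 2, −2}` the Weierstrass curve `E_k` is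
nonsingular, i.e. an elliptic curve over `ℚ`. -/
theorem discriminant_vanishes_iff :
    (∀ k : ℚ, 16 * (coeffA k ^ 2 - 4 * coeffB k) * coeffB k ^ 2 = 0 ↔
      (k = 0 ∨ k = 2 ∨ k = -2)) ∧
    (∀ k : ℚ, k ≠ 0 → k ≠ 2 → k ≠ -2 → (Ek k).Δ ≠ 0) := by
  refine ⟨fun k => ?_, fun k h0 h2 h2' => ?_⟩
  · rw [shifted_discriminant_eq_Ek_Δ, Ek_Δ_eq_zero_iff]
  · rw [Ne, Ek_Δ_eq_zero_iff]
    tauto
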